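/- Let Ψ ∈ H_M^r, let y ∈ S_M and v ∈ ℤ^d \ {0} with ‖v‖₁ ≤ M and y + v ≠ 0. Then the function η ↦ Ψ(η^{y+v,y}) also belongs to H_M^r, i.e. composition with the site-swap map preserves rank-r structure. -/
import Mathlib


open Finset

noncomputable section

namespace SelfDiffusion

/-- The box `{-M,…,M}^d ⊂ ℤ^d`. -/
def box (d M : ℕ) : Finset (Fin d → ℤ) :=
  Fintype.piFinset fun _ => Finset.Icc (-(M : ℤ)) (M : ℤ)

/-- The set of sites `S_M = {-M,…,M}^d \ {0}`. -/
def SM (d M : ℕ) : Finset (Fin d → ℤ) := (box d M).erase 0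

/-- A site, i.e. an element of `S_M`. -/
abbrev Site (d M : ℕ) := {s : Fin d → ℤ // s ∈ SM d M}

/-- A particle configuration `η ∈ {0,1}^{S_M}`. -/
abbrev Cfg (d M : ℕ) := Site d M → Fin 2

/-- The representative of `x` in `{-M,…,M}` modulo `2M+1`. -/
def redInt (M : ℕ) (x : ℤ) : ℤ := (x + M) % (2 * M + 1) - M

/-- The representative of `s ∈ ℤ^d` in the box `{-M,…,M}^d`, coordinatewise mod `2M+1`. -/
def redVec (d M : ℕ) (s : Fin d → ℤ) : Fin d → ℤ := fun i => redInt M (s i)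

lemma redInt_mem (M : ℕ) (x : ℤ) : redInt M x ∈ Finset.Icc (-(M : ℤ)) (M : ℤ) := by
  have h1 : (0 : ℤ) < 2 * M + 1 := by positivity
  have h2 := Int.emod_nonneg (x + M) (by omega : (2 * (M : ℤ) + 1) ≠ 0)
  have h3 := Int.emod_lt_of_pos (x + (M : ℤ)) h1
  rw [Finset.mem_Icc, redInt]
  omega

lemma redVec_mem_box (d M : ℕ) (s : Fin d → ℤ) : redVec d M s ∈ box d M := by
  rw [box, Fintype.mem_piFinset]
  exact fun i => redInt_mem M (s i)

/-- The periodic extension `η̃` of a configuration `η`, evaluated at `w ∈ ℤ^d`. -/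
def extCfg {d M : ℕ} (η : Cfg d M) (w : Fin d → ℤ) : Fin 2 :=
  if h : redVec d M w = 0 then 1
  else η ⟨redVec d M w, Finset.mem_erase.mpr ⟨h, redVec_mem_box d M w⟩⟩

/-- The swapped configuration `η^{y,z}`. -/
def swap {d M : ℕ} (η : Cfg d M) (y z : Fin d → ℤ) : Cfg d M := fun s =>
  if s.val = redVec d M y then extCfg η z
  else if s.val = redVec d M z then extCfg η y
  else η s

/-- The shifted configuration `η^{0,w}` (tagged-particle jump in direction `w`). -/
def shift {d M : ℕ} (η : Cfg d M) (w : Fin d → ℤ) : Cfg d M := fun s =>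
  if s.val = -w then 0 else extCfg η (s.val + w)

/-- Number of occupied sites of a configuration. -/
def nPart {d M : ℕ} (η : Cfg d M) : ℕ := ∑ s, (η s : ℕ)

/-- `C_{M,ℓ}`: configurations with exactly `ℓ` occupied sites. -/
def CSet (d M : ℕ) (ℓ : ℕ) : Finset (Cfg d M) :=
  Finset.univ.filter fun η => nPart η = ℓ

/-- ℓ¹ norm on `ℤ^d`. -/
def oneNorm (d : ℕ) (v : Fin d → ℤ) : ℤ := ∑ i, |v i|

/-- Dot product `u · v`. -/
def dotR (d : ℕ) (u : Fin d → ℝ) (v : Fin d → ℤ) : ℝ := ∑ i, u i * (v i : ℝ)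

/-- The summand (over `η`) of the functional `A_M^u`. -/
def bracket {d M K : ℕ} (u : Fin d → ℝ) (v : Fin K → Fin d → ℤ) (p : Fin K → ℝ)
    (Ψ : Cfg d M → ℝ) (η : Cfg d M) : ℝ :=
  ∑ k, p k *
    ((1 - ((extCfg η (v k) : ℕ) : ℝ)) *
        (dotR d u (v k) + Ψ (shift η (v k)) - Ψ η) ^ 2
      + (1 / 2) * ∑ y ∈ (SM d M).filter (fun y => y + v k ≠ 0),
          (Ψ (swap η (y + v k) y) - Ψ η) ^ 2)

/-- The functional `A_M^u`. -/
def AM {d M K : ℕ} (u : Fin d → ℝ) (v : Fin K → Fin d → ℤ) (p : Fin K → ℝ)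
    (Ψ : Cfg d M → ℝ) : ℝ :=
  ∑ η : Cfg d M, bracket u v p Ψ η

/-- The functional `A_{M,ℓ}^u`. -/
def AMl {d M K : ℕ} (u : Fin d → ℝ) (v : Fin K → Fin d → ℤ) (p : Fin K → ℝ)
    (ℓ : ℕ) (Ψ : Cfg d M → ℝ) : ℝ :=
  (1 / ((CSet d M ℓ).card : ℝ)) * ∑ η ∈ CSet d M ℓ, bracket u v p Ψ η

/-- `Ψ ∈ H_M^r`: `Ψ` is a sum of `r` pure tensor product (rank-1) functions. -/
def IsRankLE {d M : ℕ} (r : ℕ) (Ψ : Cfg d M → ℝ) : Prop :=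
  ∃ R : Fin r → Site d M → Fin 2 → ℝ, ∀ η, Ψ η = ∑ k, ∏ s, R k s (η s)

lemma redInt_eq_self (M : ℕ) (x : ℤ) (h1 : -(M : ℤ) ≤ x) (h2 : x ≤ M) :
    redInt M x = x := by
  have : (x + M) % (2 * M + 1) = x + M := Int.emod_eq_of_lt (by omega) (by omega)
  unfold redInt; omega

lemma dvd_of_redInt_eq (M : ℕ) (x c : ℤ) (h : redInt M x = c) :
    (2 * (M : ℤ) + 1) ∣ (x - c) := by
  have h' : (x + M) % (2 * M + 1) = c + M := by unfold redInt at h; omega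
  have := Int.dvd_self_sub_of_emod_eq h'
  have hx : x + (M : ℤ) - (c + M) = x - c := by ring
  rwa [hx] at this

/-- composition with the site-swap map `η ↦ η^{y+v,y}` preserves the rank-`r`
structure: if `Ψ ∈ H_M^r` then `η ↦ Ψ(η^{y+v,y})` is in `H_M^r` as well. -/
theorem statement8 (d M : ℕ) (hd : 1 ≤ d) (hM : 1 ≤ M) (r : ℕ)
    (Ψ : Cfg d M → ℝ) (hΨ : IsRankLE r Ψ)
    (y : Fin d → ℤ) (hy : y ∈ SM d M)
    (v : Fin d → ℤ) (hv0 : v ≠ 0) (hv1 : oneNorm d v ≤ (M : ℤ)) (hyv : y + v ≠ 0) :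
    IsRankLE r (fun η : Cfg d M => Ψ (swap η (y + v) y)) := by
  obtain ⟨R, hR⟩ := hΨ
  obtain ⟨hy0, hybox⟩ := Finset.mem_erase.mp hy
  rw [box, Fintype.mem_piFinset] at hybox
  have hyb : ∀ i, -(M : ℤ) ≤ y i ∧ y i ≤ M := fun i => Finset.mem_Icc.mp (hybox i)
  have hvb : ∀ i, |v i| ≤ (M : ℤ) := by
    intro i
    unfold oneNorm at hv1
    calc |v i| ≤ ∑ j, |v j| :=
          Finset.single_le_sum (f := fun j => |v j|) (fun j _ => abs_nonneg _) (Finset.mem_univ i)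
    _ ≤ M := hv1
  have hredy : redVec d M y = y := by
    funext i
    exact redInt_eq_self M (y i) (hyb i).1 (hyb i).2
  have hA0 : redVec d M (y + v) ≠ 0 := by
    intro h
    apply hyv
    funext i
    have hdvd : (2 * (M : ℤ) + 1) ∣ ((y + v) i - 0) := by
      apply dvd_of_redInt_eq
      have := congrFun h i
      simpa [redVec] using this
    rw [sub_zero] at hdvd
    have habs : |(y + v) i| < 2 * (M : ℤ) + 1 := by
      have h1 := abs_le.mp (hvb i)
      have h2 := hyb i
      simp only [Pi.add_apply]
      rw [abs_lt]
      omega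
    have := Int.eq_zero_of_abs_lt_dvd hdvd habs
    simpa using this
  have hAmem : redVec d M (y + v) ∈ SM d M :=
    Finset.mem_erase.mpr ⟨hA0, redVec_mem_box d M (y + v)⟩
  set A : Site d M := ⟨redVec d M (y + v), hAmem⟩ with hAdef
  set Y : Site d M := ⟨y, hy⟩ with hYdef
  have hextY : ∀ η : Cfg d M, extCfg η y = η Y := by
    intro η
    unfold extCfg
    rw [dif_neg (by rw [hredy]; exact hy0)]
    congr 1
    exact Subtype.ext hredy
  have hextA : ∀ η : Cfg d M, extCfg η (y + v) = η A := by
    intro η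
    unfold extCfg
    rw [dif_neg hA0]
  have hswap : ∀ (η : Cfg d M) (s : Site d M),
      swap η (y + v) y s = η (Equiv.swap A Y s) := by
    intro η s
    unfold swap
    by_cases h1 : s = A
    · rw [if_pos (by rw [h1]), h1, Equiv.swap_apply_left]
      exact hextY η
    · rw [if_neg (fun hh => h1 (Subtype.ext hh))]
      by_cases h2 : s = Y
      · rw [if_pos (by rw [h2, hredy]), h2, Equiv.swap_apply_right]
        exact hextA η
      · rw [if_neg (fun hh => h2 (Subtype.ext (by rwa [hredy] at hh))),
          Equiv.swap_apply_of_ne_of_ne h1 h2]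
  refine ⟨fun k s => R k (Equiv.swap A Y s), fun η => ?_⟩
  show Ψ (swap η (y + v) y) = _
  rw [hR]
  refine Finset.sum_congr rfl fun k _ => ?_
  have := Fintype.prod_equiv (Equiv.swap A Y)
    (fun s => R k (Equiv.swap A Y s) (η s))
    (fun s => R k s (swap η (y + v) y s))
    (fun s => by simp only [hswap, Equiv.swap_apply_self])
  exact this.symm

end SelfDiffusion
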